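/- arXiv:1004.0487 — 2 statements merged into one kernel-verified Lean document; each statement's English description precedes it below -/
import Mathlib

section
/- Let $\beta_{\min} \leq \beta \leq \beta_{\max}$ and $V_w > 0$ be fixed. Let $C_p : (0,\infty) \times [\beta_{\min}, \beta_{\max}] \to \mathbb{R}$ be continuous in $\lambda$, and suppose: (A2) there exists $c > 0$ with $C_p(\lambda, \beta) \leq c\lambda$ for all $\lambda > 0$; (A3) there exists $\lambda_1 > 0$ with $C_p(\lambda, \beta) > 0$ for all $\lambda \in (0, \lambda_1)$. Define $T_m(\omega_r) = \frac{\tfrac{1}{2}\rho A\, C_p(\omega_r R / V_w, \beta) V_w^3}{\omega_r}$ with $\rho, A, R > 0$, let $C_f > 0$, $a' < 0$, and $g(\omega_r) = T_m(\omega_r) - a' - C_f \omega_r$. Then there exists $\omega_r^{(1)} \in (0, \infty)$ such that $g(\omega_r^{(1)}) = 0$ and $g(\omega_r) > 0$ for all $\omega_r \in (0, \omega_r^{(1)})$. -/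
/-!
By (A3) the torque is positive just to the right of `0`, where `-a' - Cf ω` is close to
`-a' > 0`, so `g > 0` on some `(0, ε]`. By (A2) the torque is bounded by a constant, so the
friction term makes `g` nonpositive at some `b`. The least point of `[ε, b]` where `g ≤ 0` is a
zero of `g` by the intermediate value theorem, and `g` is positive before it.
-/

open Set Filter Topology

section FirstZero

variable {α δ : Type*} [ConditionallyCompleteLinearOrder α] [TopologicalSpace α] [OrderTopology α]
  [DenselyOrdered α] [LinearOrder δ] [TopologicalSpace δ] [OrderClosedTopology δ] [Zero δ]
  {g : α → δ} {a b : α}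

theorem exists_first_zero_of_continuousOn_Icc (hab : a ≤ b) (hg : ContinuousOn g (Icc a b))
    (ha : 0 < g a) (hb : g b ≤ 0) : ∃ x ∈ Ioc a b, g x = 0 ∧ ∀ y ∈ Ico a x, 0 < g y := by
  set S := Icc a b ∩ g ⁻¹' Iic 0
  have hS : IsCompact S :=
    isCompact_Icc.of_isClosed_subset
      (hg.preimage_isClosed_of_isClosed isClosed_Icc isClosed_Iic) inter_subset_left
  obtain ⟨x, ⟨⟨hax, hxb⟩, hgx⟩, hleast⟩ := hS.exists_isLeast ⟨b, ⟨hab, le_rfl⟩, hb⟩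
  have hpos : ∀ y ∈ Ico a x, 0 < g y := fun y ⟨hay, hyx⟩ =>
    not_le.1 fun hgy => (hleast ⟨⟨hay, hyx.le.trans hxb⟩, hgy⟩).not_gt hyx
  obtain ⟨z, ⟨haz, hzx_le⟩, hgz⟩ :=
    intermediate_value_Icc' hax (hg.mono (Icc_subset_Icc_right hxb)) ⟨hgx, ha.le⟩
  have hzx : z = x := le_antisymm hzx_le (hleast ⟨⟨haz, hzx_le.trans hxb⟩, hgz.le⟩)
  refine ⟨x, ⟨hax.lt_of_ne ?_, hxb⟩, hzx ▸ hgz, hpos⟩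
  rintro rfl
  exact (ha.trans_le hgx).false

theorem exists_first_zero_of_eventually_pos (hg : ContinuousOn g (Ioi a))
    (hnear : ∀ᶠ x in 𝓝[>] a, 0 < g x) (hab : a < b) (hb : g b ≤ 0) :
    ∃ x > a, g x = 0 ∧ ∀ y ∈ Ioo a x, 0 < g y := by
  obtain ⟨ε, haε, hε⟩ := (nhdsGT_basis_Ioc_of_exists_gt ⟨b, hab⟩).eventually_iff.1 hnear
  have hεb : ε < b := not_le.1 fun hbε => (hε ⟨hab, hbε⟩).not_ge hb
  obtain ⟨x, ⟨hεx, -⟩, hgx, hpos⟩ := exists_first_zero_of_continuousOn_Icc hεb.le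
    (hg.mono fun y hy => haε.trans_le hy.1) (hε ⟨haε, le_rfl⟩) hb
  refine ⟨x, haε.trans hεx, hgx, fun y ⟨hay, hyx⟩ => ?_⟩
  rcases le_or_gt y ε with hyε | hεy
  · exact hε ⟨hay, hyε⟩
  · exact hpos y ⟨hεy.le, hyx⟩

end FirstZero

/-- `T_m(ω)`, with `ω R / Vw` the tip speed ratio `λ` and `Cp` the power coefficient at the fixed
pitch angle `β`. -/
noncomputable def aeroTorque (ρ A R Vw : ℝ) (Cp : ℝ → ℝ) (ω : ℝ) : ℝ :=
  1 / 2 * ρ * A * Cp (ω * R / Vw) * Vw ^ 3 / ω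

section AeroTorque

variable {ρ A R Vw : ℝ} {Cp : ℝ → ℝ}

theorem tipSpeedRatio_pos (hR : 0 < R) (hVw : 0 < Vw) {ω : ℝ} (hω : 0 < ω) : 0 < ω * R / Vw := by
  positivity

theorem continuousOn_aeroTorque (hR : 0 < R) (hVw : 0 < Vw) (hCp : ContinuousOn Cp (Ioi 0)) :
    ContinuousOn (aeroTorque ρ A R Vw Cp) (Ioi 0) := by
  have hTsr : ContinuousOn (fun ω => Cp (ω * R / Vw)) (Ioi 0) :=
    hCp.comp (by fun_prop) fun ω hω => tipSpeedRatio_pos hR hVw hω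
  exact ((continuousOn_const.mul hTsr).mul continuousOn_const).div continuousOn_id
    fun ω hω => (mem_Ioi.1 hω).ne'

theorem eventually_aeroTorque_pos (hρA : 0 < ρ * A) (hR : 0 < R) (hVw : 0 < Vw)
    (hCp : ∀ᶠ l in 𝓝[>] 0, 0 < Cp l) : ∀ᶠ ω in 𝓝[>] 0, 0 < aeroTorque ρ A R Vw Cp ω := by
  have hTsr : Tendsto (fun ω => ω * R / Vw) (𝓝[>] 0) (𝓝[>] 0) := by
    refine tendsto_nhdsWithin_of_tendsto_nhds_of_eventually_within _ ?_ ?_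
    · exact (((continuous_id.mul_const R).div_const Vw).tendsto' 0 0 (by simp)).mono_left
        nhdsWithin_le_nhds
    · exact eventually_nhdsWithin_of_forall fun ω hω => tipSpeedRatio_pos hR hVw hω
  filter_upwards [hTsr.eventually hCp, self_mem_nhdsWithin] with ω hCpω (hω : 0 < ω)
  have hnum : 0 < 1 / 2 * (ρ * A) * Cp (ω * R / Vw) * Vw ^ 3 := by positivity
  rw [aeroTorque]
  exact div_pos (by simpa only [mul_assoc] using hnum) hω

theorem aeroTorque_le (hρA : 0 ≤ ρ * A) (hR : 0 < R) (hVw : 0 < Vw) {c : ℝ}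
    (hCp : ∀ l > 0, Cp l ≤ c * l) {ω : ℝ} (hω : 0 < ω) :
    aeroTorque ρ A R Vw Cp ω ≤ 1 / 2 * ρ * A * c * R * Vw ^ 2 := by
  rw [aeroTorque, div_le_iff₀ hω]
  calc 1 / 2 * ρ * A * Cp (ω * R / Vw) * Vw ^ 3
      = 1 / 2 * (ρ * A) * Vw ^ 3 * Cp (ω * R / Vw) := by ring
    _ ≤ 1 / 2 * (ρ * A) * Vw ^ 3 * (c * (ω * R / Vw)) :=
        mul_le_mul_of_nonneg_left (hCp _ (tipSpeedRatio_pos hR hVw hω)) (by positivity)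
    _ = 1 / 2 * ρ * A * c * R * Vw ^ 2 * ω := by field_simp

end AeroTorque

theorem eventually_sub_sub_mul_pos {T : ℝ → ℝ} {a' Cf : ℝ} (hT : ∀ᶠ ω in 𝓝[>] 0, 0 < T ω)
    (ha' : a' < 0) : ∀ᶠ ω in 𝓝[>] 0, 0 < T ω - a' - Cf * ω := by
  have hfric : ∀ᶠ ω in 𝓝 (0 : ℝ), Cf * ω < -a' :=
    (continuous_const.mul continuous_id).continuousAt.eventually_lt continuousAt_const
      (by simpa using ha')
  filter_upwards [hT, nhdsWithin_le_nhds hfric] with ω hTω hω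
  linarith

theorem exists_sub_sub_mul_nonpos {T : ℝ → ℝ} {K a' Cf : ℝ} (hT : ∀ ω > 0, T ω ≤ K)
    (hCf : 0 < Cf) : ∃ b > 0, T b - a' - Cf * b ≤ 0 := by
  refine ⟨max 1 ((K - a') / Cf), by positivity, ?_⟩
  have hb : K - a' ≤ Cf * max 1 ((K - a') / Cf) :=
    (div_le_iff₀' hCf).1 (le_max_right _ _)
  linarith [hT _ (by positivity : (0 : ℝ) < max 1 ((K - a') / Cf))]

theorem stmt_6_general (β Vw ρ A R Cf a' : ℝ)
    (hVw : Vw > 0)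
    (Cp : ℝ → ℝ → ℝ)
    (hcont : ContinuousOn (fun l => Cp l β) (Set.Ioi 0))
    (hA2 : ∃ c > (0 : ℝ), ∀ l > (0 : ℝ), Cp l β ≤ c * l)
    (hA3 : ∃ l1 > (0 : ℝ), ∀ l ∈ Set.Ioo (0 : ℝ) l1, Cp l β > 0)
    (hρ : ρ > 0) (hAr : A > 0) (hR : R > 0) (hCf : Cf > 0) (ha' : a' < 0) :
    let Tm : ℝ → ℝ := fun ωr => (1 / 2 * ρ * A * Cp (ωr * R / Vw) β * Vw ^ 3) / ωr
    let g : ℝ → ℝ := fun ωr => Tm ωr - a' - Cf * ωr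
    ∃ ωr1 > (0 : ℝ), g ωr1 = 0 ∧ ∀ ωr ∈ Set.Ioo (0 : ℝ) ωr1, g ωr > 0 := by
  intro Tm g
  obtain ⟨c, -, hA2⟩ := hA2
  obtain ⟨l1, hl1, hA3⟩ := hA3
  have hρA : 0 < ρ * A := mul_pos hρ hAr
  have hg : ContinuousOn g (Ioi 0) :=
    (((continuousOn_aeroTorque hR hVw hcont).sub continuousOn_const).sub
      (continuousOn_const.mul continuousOn_id))
  have hnear : ∀ᶠ ω in 𝓝[>] 0, 0 < g ω :=
    eventually_sub_sub_mul_pos (eventually_aeroTorque_pos hρA hR hVw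
      (mem_of_superset (Ioo_mem_nhdsGT hl1) hA3)) ha'
  obtain ⟨b, hb, hgb⟩ := exists_sub_sub_mul_nonpos (a' := a')
    (fun ω hω => aeroTorque_le hρA.le hR hVw hA2 hω) hCf
  exact exists_first_zero_of_eventually_pos hg hnear hb hgb

theorem stmt_6 (βmin βmax β Vw ρ A R Cf a' : ℝ)
    (hβ : βmin ≤ β ∧ β ≤ βmax) (hVw : Vw > 0)
    (Cp : ℝ → ℝ → ℝ)
    (hcont : ContinuousOn (fun l => Cp l β) (Set.Ioi 0))
    (hA2 : ∃ c > (0 : ℝ), ∀ l > (0 : ℝ), Cp l β ≤ c * l)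
    (hA3 : ∃ l1 > (0 : ℝ), ∀ l ∈ Set.Ioo (0 : ℝ) l1, Cp l β > 0)
    (hρ : ρ > 0) (hAr : A > 0) (hR : R > 0) (hCf : Cf > 0) (ha' : a' < 0) :
    let Tm : ℝ → ℝ := fun ωr => (1 / 2 * ρ * A * Cp (ωr * R / Vw) β * Vw ^ 3) / ωr
    let g : ℝ → ℝ := fun ωr => Tm ωr - a' - Cf * ωr
    ∃ ωr1 > (0 : ℝ), g ωr1 = 0 ∧ ∀ ωr ∈ Set.Ioo (0 : ℝ) ωr1, g ωr > 0 :=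
  stmt_6_general β Vw ρ A R Cf a' hVw Cp hcont hA2 hA3 hρ hAr hR hCf ha'
end

section
/- Let $J, \alpha > 0$, let $g : (0,\infty) \to \mathbb{R}$ be continuous, and suppose there exists $\omega_r^{(1)} > 0$ such that $g(\omega_r) > 0$ for all $\omega_r \in (0, \omega_r^{(1)})$. Fix $\omega_{rd}$ with $0 < \omega_{rd} < \omega_r^{(1)}$. Then $\omega_r = \omega_{rd}$ is the unique equilibrium point in $(0,\infty)$ of the differential equation $J \dot{\omega}_r = \min\{\alpha(\omega_{rd} - \omega_r),\, g(\omega_r)\}$, i.e., the right-hand side vanishes at $\omega_r = \omega_{rd}$ and is nonzero at every other $\omega_r \in (0, \infty)$. -/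
theorem min_mul_sub_eq_zero_iff {K : Type*} [Field K] [LinearOrder K] [IsStrictOrderedRing K]
    {a c x y : K} (ha : 0 < a) (hy : x ≤ c → 0 < y) :
    min (a * (c - x)) y = 0 ↔ x = c := by
  refine ⟨fun h => ?_, fun h => by simp [h, (hy h.le).le]⟩
  rcases lt_trichotomy x c with hlt | heq | hgt
  · have : 0 < min (a * (c - x)) y := lt_min (mul_pos ha (sub_pos.2 hlt)) (hy hlt.le)
    exact absurd h this.ne'
  · exact heq
  · have : min (a * (c - x)) y < 0 := (min_le_left _ _).trans_lt (mul_neg_of_pos_of_neg ha (sub_neg.2 hgt))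
    exact absurd h this.ne

theorem stmt_8_general (α : ℝ) (hα : α > 0) (g : ℝ → ℝ)
    (ωr1 : ℝ)
    (hgpos : ∀ ω ∈ Set.Ioo (0 : ℝ) ωr1, g ω > 0)
    (ωrd : ℝ) (h1 : 0 < ωrd) (h2 : ωrd < ωr1) :
    min (α * (ωrd - ωrd)) (g ωrd) = 0 ∧
    ∀ ω > (0 : ℝ), ω ≠ ωrd → min (α * (ωrd - ω)) (g ω) ≠ 0 := by
  have hg_pos_below {ω : ℝ} (hω : 0 < ω) (hle : ω ≤ ωrd) : 0 < g ω :=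
    hgpos ω ⟨hω, hle.trans_lt h2⟩
  refine ⟨(min_mul_sub_eq_zero_iff hα (hg_pos_below h1)).2 rfl, fun ω hω hne => ?_⟩
  exact mt (min_mul_sub_eq_zero_iff hα (hg_pos_below hω)).1 hne

theorem stmt_8 (J α : ℝ) (hJ : J > 0) (hα : α > 0) (g : ℝ → ℝ)
    (hcont : ContinuousOn g (Set.Ioi 0)) (ωr1 : ℝ) (hωr1 : ωr1 > 0)
    (hgpos : ∀ ω ∈ Set.Ioo (0 : ℝ) ωr1, g ω > 0)
    (ωrd : ℝ) (h1 : 0 < ωrd) (h2 : ωrd < ωr1) :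
    min (α * (ωrd - ωrd)) (g ωrd) = 0 ∧
    ∀ ω > (0 : ℝ), ω ≠ ωrd → min (α * (ωrd - ω)) (g ω) ≠ 0 :=
  stmt_8_general α hα g ωr1 hgpos ωrd h1 h2
end
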